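/- Let τ be a θ-compatible stopping time with 𝔼_x τ < ∞ for every x ∈ 𝐗, and let ν be a nonzero Q-invariant borelian measure on 𝐗. Then R*ν is a nonzero P-invariant measure on 𝐗, S*R*ν = ν, and ν is absolutely continuous with respect to R*ν. Moreover, if the function QR(1) is bounded on 𝐗, then R*ν is a finite measure if and only if ν is a finite measure. -/

import Mathlib

open MeasureTheory Filter Set Topology
open scoped ENNReal NNReal ENat

noncomputable section

/-- The shift on path space. -/
def pshift {X : Type*} (ω : ℕ → X) : ℕ → X := fun n => ω (n + 1)

/-- The natural filtration on path space: the σ-algebra generated by the first `n+1`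
coordinates. -/
def pathFiltration (X : Type*) [MeasurableSpace X] (n : ℕ) : MeasurableSpace (ℕ → X) :=
  MeasurableSpace.comap (fun ω (i : Fin (n + 1)) => ω (i : ℕ)) inferInstance

/-- A Markov chain on `X`, given by the family of its path-space laws `ℙ_x`. -/
structure MarkovChain (X : Type*) [MeasurableSpace X] where
  law : X → Measure (ℕ → X)
  prob : ∀ x, IsProbabilityMeasure (law x)
  meas_law : Measurable law
  start : ∀ x, (law x).map (fun ω => ω 0) = Measure.dirac x
  markov : ∀ (x : X) (n : ℕ) (A : Set (ℕ → X)),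
      MeasurableSet[pathFiltration X n] A → ∀ g : (ℕ → X) → ℝ≥0∞, Measurable g →
      ∫⁻ ω in A, g (fun k => ω (k + n)) ∂law x = ∫⁻ ω in A, ∫⁻ η, g η ∂law (ω n) ∂law x

variable {X : Type*} [MeasurableSpace X]

/-- A stopping time on path space, with values in `ℕ∞`. -/
def IsPathStoppingTime (τ : (ℕ → X) → ℕ∞) : Prop :=
  ∀ n : ℕ, MeasurableSet[pathFiltration X n] {ω | τ ω = (n : ℕ∞)}

/-- `τ` is θ-compatible: `ℙ_x(τ = 0) = 0` and, almost everywhere, `τ ≥ 2` implies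
`τ ∘ θ = τ - 1`. -/
def ThetaCompatible (M : MarkovChain X) (τ : (ℕ → X) → ℕ∞) : Prop :=
  (∀ x, M.law x {ω | τ ω = 0} = 0) ∧
    ∀ x, ∀ᵐ ω ∂M.law x, 2 ≤ τ ω → τ (pshift ω) = τ ω - 1

/-- The Markov operator `P` on nonnegative functions: `Pf(x) = 𝔼_x f(X_1)`. -/
def Pop (M : MarkovChain X) (f : X → ℝ≥0∞) (x : X) : ℝ≥0∞ := ∫⁻ ω, f (ω 1) ∂M.law x

/-- The induced operator `Q`: `Qg(x) = ∫_{τ<∞} g(X_τ) dℙ_x`. -/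
def Qop (M : MarkovChain X) (τ : (ℕ → X) → ℕ∞) (g : X → ℝ≥0∞) (x : X) : ℝ≥0∞ :=
  ∫⁻ ω in {ω | τ ω ≠ ⊤}, g (ω (τ ω).toNat) ∂M.law x

/-- The operator `S`: `Sf(x) = ∫_{τ=1} f(X_1) dℙ_x`. -/
def Sop (M : MarkovChain X) (τ : (ℕ → X) → ℕ∞) (f : X → ℝ≥0∞) (x : X) : ℝ≥0∞ :=
  ∫⁻ ω in {ω | τ ω = 1}, f (ω 1) ∂M.law x

/-- The operator `R`: `Rf(x) = ∫_{τ<∞} (f(X_0) + ⋯ + f(X_{τ-1})) dℙ_x`. -/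
def Rop (M : MarkovChain X) (τ : (ℕ → X) → ℕ∞) (f : X → ℝ≥0∞) (x : X) : ℝ≥0∞ :=
  ∫⁻ ω in {ω | τ ω ≠ ⊤}, ∑ k ∈ Finset.range (τ ω).toNat, f (ω k) ∂M.law x

/-- `𝔼_x τ`, with values in `[0,∞]`. -/
def EtauE (M : MarkovChain X) (τ : (ℕ → X) → ℕ∞) (x : X) : ℝ≥0∞ :=
  ∫⁻ ω, (τ ω : ℝ≥0∞) ∂M.law x

/-- `μ` is `P`-invariant: `∫ Pf dμ = ∫ f dμ` for every bounded nonnegative borelian `f`. -/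
def PInvariant (M : MarkovChain X) (μ : Measure X) : Prop :=
  ∀ f : X → ℝ≥0∞, Measurable f → (∃ C : ℝ≥0∞, C ≠ ⊤ ∧ ∀ x, f x ≤ C) →
    ∫⁻ x, Pop M f x ∂μ = ∫⁻ x, f x ∂μ

/-- `ν` is `Q`-invariant: `∫ Qf dν = ∫ f dν` for every bounded nonnegative borelian `f`. -/
def QInvariant (M : MarkovChain X) (τ : (ℕ → X) → ℕ∞) (ν : Measure X) : Prop :=
  ∀ f : X → ℝ≥0∞, Measurable f → (∃ C : ℝ≥0∞, C ≠ ⊤ ∧ ∀ x, f x ≤ C) →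
    ∫⁻ x, Qop M τ f x ∂ν = ∫⁻ x, f x ∂ν

/-- `ν = S*μ`, i.e. `ν(A) = ∫ S𝟙_A dμ` for every borelian `A`. -/
def SstarEq (M : MarkovChain X) (τ : (ℕ → X) → ℕ∞) (μ ν : Measure X) : Prop :=
  ∀ A : Set X, MeasurableSet A → ν A = ∫⁻ x, Sop M τ (A.indicator 1) x ∂μ

/-- `m = R*ν`, i.e. `m(A) = ∫ R𝟙_A dν` for every borelian `A`. -/
def RstarEq (M : MarkovChain X) (τ : (ℕ → X) → ℕ∞) (ν m : Measure X) : Prop :=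
  ∀ A : Set X, MeasurableSet A → m A = ∫⁻ x, Rop M τ (A.indicator 1) x ∂ν

/-- the real-valued Markov operator -/
def Pr (M : MarkovChain X) (f : X → ℝ) (x : X) : ℝ := ∫ ω, f (ω 1) ∂M.law x

/-- the real-valued induced operator -/
def Qr (M : MarkovChain X) (τ : (ℕ → X) → ℕ∞) (g : X → ℝ) (x : X) : ℝ :=
  ∫ ω in {ω | τ ω ≠ ⊤}, g (ω (τ ω).toNat) ∂M.law x

/-- the real-valued operator `S` -/
def Sr (M : MarkovChain X) (τ : (ℕ → X) → ℕ∞) (f : X → ℝ) (x : X) : ℝ :=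
  ∫ ω in {ω | τ ω = 1}, f (ω 1) ∂M.law x

/-- the real-valued operator `R` -/
def Rr (M : MarkovChain X) (τ : (ℕ → X) → ℕ∞) (f : X → ℝ) (x : X) : ℝ :=
  ∫ ω in {ω | τ ω ≠ ⊤}, ∑ k ∈ Finset.range (τ ω).toNat, f (ω k) ∂M.law x

/-- `𝔼_x τ` as a real number. -/
def Etau (M : MarkovChain X) (τ : (ℕ → X) → ℕ∞) (x : X) : ℝ := (EtauE M τ x).toReal

/-- `B_u = sup (Pu - u) + 1`. -/
def Bu (M : MarkovChain X) (u : X → ℝ) : ℝ :=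
  sSup (Set.range fun x => Pr M u x - u x) + 1

/-- the weight `u - Pu + B_u` defining the space `𝓔_u`. -/
def wE (M : MarkovChain X) (u : X → ℝ) : X → ℝ := fun x => u x - Pr M u x + Bu M u

/-- `u` is a drift function: `u ≥ 1`, `u - Pu` is bounded below and, with
`B_u = sup (Pu - u) + 1`, the functions `Qu`, `𝔼τ/u` and `P(u-Pu+B_u)/(u-Pu+B_u)` are
bounded. -/
structure IsDrift (M : MarkovChain X) (τ : (ℕ → X) → ℕ∞) (u : X → ℝ) : Prop where
  meas : Measurable u
  one_le : ∀ x, 1 ≤ u x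
  int_one : ∀ x, Integrable (fun ω => u (ω 1)) (M.law x)
  bdd : BddAbove (Set.range fun x => Pr M u x - u x)
  etau_ne_top : ∀ x, EtauE M τ x ≠ ⊤
  qu_bdd : ∃ C : ℝ, ∀ x, Qr M τ u x ≤ C
  etau_div_bdd : ∃ C : ℝ, ∀ x, Etau M τ x ≤ C * u x
  pw_bdd : ∃ C : ℝ, ∀ x, Pr M (wE M u) x ≤ C * wE M u x

/-- membership in the weighted space `𝓕^p_v` : `f` is borelian and `|f| ≤ C v^{1/p}`. -/
def MemWp (v : X → ℝ) (p : ℝ) (f : X → ℝ) : Prop :=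
  Measurable f ∧ ∃ C : ℝ, ∀ x, |f x| ≤ C * v x ^ (1 / p)

/-- the norm of the weighted space `𝓕^p_v` : `‖f‖ = sup_x |f(x)|/v(x)^{1/p}`. -/
def normWp (v : X → ℝ) (p : ℝ) (f : X → ℝ) : ℝ := ⨆ x, |f x| / v x ^ (1 / p)

/-- ergodicity among a class of invariant measures: a finite nonzero invariant measure is
ergodic if it is not a nontrivial convex combination of two distinct invariant probability
measures. -/
def ErgodicAmong (Inv : Measure X → Prop) (μ : Measure X) : Prop :=
  μ ≠ 0 ∧ ∀ (ν₁ ν₂ : Measure X) (t : ℝ≥0∞), Inv ν₁ → Inv ν₂ →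
    IsProbabilityMeasure ν₁ → IsProbabilityMeasure ν₂ → 0 < t → t < 1 →
    μ = μ Set.univ • (t • ν₁ + (1 - t) • ν₂) → ν₁ = ν₂

/-!
Along a path, `∑_{k<τ} f(X_{k+1}) + f(X_0) = ∑_{k<τ} f(X_k) + f(X_τ)`. Since `{k < τ}` is
`𝓕_k`-measurable, the Markov property at time `k` turns this into `RPf + f = Rf + Qf`, more
precisely `RPf = T + Qf` and `Rf = f + T` with `T(x) = ∑_k 𝔼_x[f(X_{k+1}); k + 1 < τ]`.
Realising `R*ν` as the occupation measure `∑_k ℙ_ν(X_k ∈ ·, k < τ)`, integration against a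
`Q`-invariant `ν` gives `P`-invariance. On `{k < τ}`, θ-compatibility gives `τ ∘ θ^k = τ - k`,
so `S` applied at `X_k` picks out the event `{τ = k + 1}`: hence `RS = Q` and `S*R*ν = ν`.
As `τ ≥ 1`, `f ≤ Rf`, so `ν ≤ R*ν`; and `R*ν(𝐗) = ∫ R1 dν = ∫ QR1 dν` is finite when `QR1`
is bounded and `ν` is finite.
-/

lemma pathFiltration_le (n : ℕ) :
    pathFiltration X n ≤ (inferInstance : MeasurableSpace (ℕ → X)) :=
  (measurable_pi_lambda _ fun _ => measurable_pi_apply _).comap_le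

lemma pathFiltration_mono : Monotone (pathFiltration X) := fun _ m hnm =>
  Measurable.comap_le <| @measurable_pi_lambda _ _ _ (pathFiltration X m) _ _ fun i =>
    (measurable_pi_apply (Fin.castLE (Nat.succ_le_succ hnm) i)).comp
      (comap_measurable fun (ω : ℕ → X) (j : Fin (m + 1)) => ω j)

lemma measurable_shift (n : ℕ) : Measurable fun (ω : ℕ → X) (j : ℕ) => ω (j + n) :=
  measurable_pi_lambda _ fun j => measurable_pi_apply (j + n)

lemma ENat.tsum_ite_coe_lt {n : ℕ∞} (hn : n ≠ ⊤) (a : ℕ → ℝ≥0∞) :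
    ∑' k : ℕ, (if (k : ℕ∞) < n then a k else 0) = ∑ k ∈ Finset.range n.toNat, a k := by
  lift n to ℕ using hn
  simp only [ENat.toNat_natCast, Nat.cast_lt]
  rw [tsum_eq_sum (s := Finset.range n) fun k hk => if_neg (by simpa using hk)]
  exact Finset.sum_congr rfl fun k hk => if_pos (Finset.mem_range.1 hk)

namespace IsPathStoppingTime

variable {τ : (ℕ → X) → ℕ∞}

protected lemma measurable (hst : IsPathStoppingTime τ) : Measurable τ :=
  ENat.measurable_iff.2 fun n => pathFiltration_le n _ (hst n)

lemma measurableSet_eq (hst : IsPathStoppingTime τ) (n : ℕ∞) :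
    MeasurableSet {ω | τ ω = n} :=
  hst.measurable (measurableSet_singleton n)

lemma measurableSet_lt (hst : IsPathStoppingTime τ) (k : ℕ) :
    MeasurableSet[pathFiltration X k] {ω | (k : ℕ∞) < τ ω} := by
  have h : {ω | (k : ℕ∞) < τ ω} = (⋃ j ∈ Iic k, {ω | τ ω = j})ᶜ := by
    ext ω
    simp only [mem_compl_iff, mem_iUnion, mem_ofPred_eq, mem_Iic, exists_prop, ← not_le,
      not_iff_not, ENat.le_natCast_iff]
    exact exists_congr fun j => and_comm
  rw [h]
  exact (MeasurableSet.biUnion (to_countable _) fun j hj => pathFiltration_mono hj _ (hst j)).compl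

lemma measurableSet_lt' (hst : IsPathStoppingTime τ) (k : ℕ) :
    MeasurableSet {ω | (k : ℕ∞) < τ ω} :=
  pathFiltration_le k _ (hst.measurableSet_lt k)

end IsPathStoppingTime

namespace MarkovChain

variable (M : MarkovChain X)

lemma measurable_lintegral_law {F : (ℕ → X) → ℝ≥0∞} (hF : Measurable F) :
    Measurable fun x => ∫⁻ ω, F ω ∂M.law x :=
  (Measure.measurable_lintegral hF).comp M.meas_law

lemma measurable_setLIntegral_law {F : (ℕ → X) → ℝ≥0∞} (hF : Measurable F)
    {s : Set (ℕ → X)} (hs : MeasurableSet s) :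
    Measurable fun x => ∫⁻ ω in s, F ω ∂M.law x := by
  simpa only [lintegral_indicator hs] using M.measurable_lintegral_law (hF.indicator hs)

lemma measurable_Pop {f : X → ℝ≥0∞} (hf : Measurable f) : Measurable (Pop M f) :=
  M.measurable_lintegral_law (hf.comp (measurable_pi_apply 1))

lemma lintegral_comp_eval_zero {f : X → ℝ≥0∞} (hf : Measurable f) (x : X) :
    ∫⁻ ω, f (ω 0) ∂M.law x = f x := by
  rw [← lintegral_map hf (measurable_pi_apply 0), M.start, lintegral_dirac' _ hf]

lemma ae_shift_mem {B : Set (ℕ → X)} (hB : MeasurableSet B)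
    (h : ∀ y, ∀ᵐ η ∂M.law y, η ∈ B) (x : X) (n : ℕ) :
    ∀ᵐ ω ∂M.law x, (fun j => ω (j + n)) ∈ B := by
  have h0 (y : X) : M.law y Bᶜ = 0 := mem_ae_iff.1 (h y)
  have hmarkov := M.markov x n univ MeasurableSet.univ (Bᶜ.indicator 1)
    (measurable_one.indicator hB.compl)
  simp only [Measure.restrict_univ, lintegral_indicator_one hB.compl, h0, lintegral_zero]
    at hmarkov
  rw [← lintegral_map (measurable_one.indicator hB.compl) (measurable_shift n),
    lintegral_indicator_one hB.compl, Measure.map_apply (measurable_shift n) hB.compl] at hmarkov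
  exact mem_ae_iff.2 hmarkov

variable {M} {τ : (ℕ → X) → ℕ∞}

lemma measurable_Sop (hst : IsPathStoppingTime τ) {f : X → ℝ≥0∞} (hf : Measurable f) :
    Measurable (Sop M τ f) :=
  M.measurable_setLIntegral_law (hf.comp (measurable_pi_apply 1)) (hst.measurableSet_eq 1)

lemma ae_tau_ne_top (hst : IsPathStoppingTime τ) (hτ : ∀ x, EtauE M τ x ≠ ⊤) (x : X) :
    ∀ᵐ ω ∂M.law x, τ ω ≠ ⊤ := by
  filter_upwards [ae_lt_top ((measurable_of_countable _).comp hst.measurable) (hτ x)] with ω hω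
  exact (ENat.toENNReal_lt_top.1 hω).ne

lemma ae_tau_ne_zero (hθ : ThetaCompatible M τ) (x : X) : ∀ᵐ ω ∂M.law x, τ ω ≠ 0 :=
  ae_iff.2 (by simpa using hθ.1 x)

lemma ae_tau_shift (hst : IsPathStoppingTime τ) (hθ : ThetaCompatible M τ) (x : X) :
    ∀ᵐ ω ∂M.law x, ∀ k : ℕ, (k : ℕ∞) < τ ω → τ (fun j => ω (j + k)) = τ ω - k := by
  have hB : MeasurableSet {η : ℕ → X | 2 ≤ τ η → τ (pshift η) = τ η - 1} :=
    hst.measurable.prodMk (hst.measurable.comp (measurable_shift 1))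
      (to_countable {p : ℕ∞ × ℕ∞ | 2 ≤ p.1 → p.2 = p.1 - 1}).measurableSet
  filter_upwards [ae_all_iff.2 (M.ae_shift_mem hB hθ.2 x)] with ω hω k
  induction k with
  | zero => simp
  | succ k ih =>
    intro hk
    have hk' : (k : ℕ∞) < τ ω := lt_of_le_of_lt (by simp) hk
    have hpshift : pshift (fun j => ω (j + k)) = fun j => ω (j + (k + 1)) :=
      funext fun j => congrArg ω (by omega)
    have h2 : 2 ≤ τ (fun j => ω (j + k)) := by
      rw [ih hk']
      generalize τ ω = t at hk ⊢
      push_cast at hk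
      enat_to_nat
      omega
    rw [← hpshift, hω k h2, ih hk', tsub_tsub, Nat.cast_succ]

lemma Rop_eq_tsum (hst : IsPathStoppingTime τ) (hτ : ∀ x, EtauE M τ x ≠ ⊤)
    {f : X → ℝ≥0∞} (hf : Measurable f) (x : X) :
    Rop M τ f x = ∑' k : ℕ, ∫⁻ ω in {ω | (k : ℕ∞) < τ ω}, f (ω k) ∂M.law x := by
  have hmeas (k : ℕ) : Measurable ({ω | (k : ℕ∞) < τ ω}.indicator fun ω => f (ω k)) :=
    (hf.comp (measurable_pi_apply k)).indicator (hst.measurableSet_lt' k)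
  calc Rop M τ f x = ∫⁻ ω, ∑ k ∈ Finset.range (τ ω).toNat, f (ω k) ∂M.law x := by
        rw [Rop, Measure.restrict_eq_self_of_ae_mem (s := {ω | τ ω ≠ ⊤}) (ae_tau_ne_top hst hτ x)]
    _ = ∫⁻ ω, ∑' k : ℕ, {ω | (k : ℕ∞) < τ ω}.indicator (fun ω => f (ω k)) ω ∂M.law x := by
        refine lintegral_congr_ae ((ae_tau_ne_top hst hτ x).mono fun ω hω => ?_)
        simp only [indicator_apply, mem_ofPred_eq, ENat.tsum_ite_coe_lt hω]
    _ = _ := by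
        rw [lintegral_tsum fun k => (hmeas k).aemeasurable]
        simp_rw [lintegral_indicator (hst.measurableSet_lt' _)]

lemma measurable_Rop (hst : IsPathStoppingTime τ) (hτ : ∀ x, EtauE M τ x ≠ ⊤)
    {f : X → ℝ≥0∞} (hf : Measurable f) : Measurable (Rop M τ f) := by
  rw [funext (Rop_eq_tsum hst hτ hf)]
  exact .tsum fun k =>
    M.measurable_setLIntegral_law (hf.comp (measurable_pi_apply k)) (hst.measurableSet_lt' k)

lemma Qop_eq_tsum (hst : IsPathStoppingTime τ) (f : X → ℝ≥0∞) (x : X) :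
    Qop M τ f x = ∑' n : ℕ, ∫⁻ ω in {ω | τ ω = n}, f (ω n) ∂M.law x := by
  have hU : {ω | τ ω ≠ ⊤} = ⋃ n : ℕ, {ω | τ ω = n} := by
    ext ω
    simp [ENat.ne_top_iff_exists, eq_comm]
  have hdisj : Pairwise (Function.onFun Disjoint fun n : ℕ => {ω | τ ω = n}) := fun i j hij =>
    disjoint_left.2 fun ω hi hj => hij (Nat.cast_injective (hi.symm.trans hj))
  rw [Qop, hU, lintegral_iUnion (fun n : ℕ => hst.measurableSet_eq n) hdisj]
  refine tsum_congr fun n => setLIntegral_congr_fun (hst.measurableSet_eq n) fun ω hω => ?_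
  simp only [mem_ofPred_eq] at hω
  rw [hω, ENat.toNat_natCast]

lemma Qop_eq_tsum_succ (hst : IsPathStoppingTime τ) (hθ : ThetaCompatible M τ)
    (f : X → ℝ≥0∞) (x : X) :
    Qop M τ f x = ∑' k : ℕ, ∫⁻ ω in {ω | τ ω = ((k + 1 : ℕ) : ℕ∞)}, f (ω (k + 1)) ∂M.law x := by
  have h0 : M.law x {ω | τ ω = ((0 : ℕ) : ℕ∞)} = 0 := by simpa using hθ.1 x
  rw [Qop_eq_tsum hst, tsum_eq_zero_add' ENNReal.summable, setLIntegral_measure_zero _ _ h0,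
    zero_add]

lemma Rop_eq_add_tsum (hst : IsPathStoppingTime τ) (hθ : ThetaCompatible M τ)
    (hτ : ∀ x, EtauE M τ x ≠ ⊤) {f : X → ℝ≥0∞} (hf : Measurable f) (x : X) :
    Rop M τ f x = f x +
      ∑' k : ℕ, ∫⁻ ω in {ω | ((k + 1 : ℕ) : ℕ∞) < τ ω}, f (ω (k + 1)) ∂M.law x := by
  have hpos : ∀ᵐ ω ∂M.law x, ω ∈ {ω | ((0 : ℕ) : ℕ∞) < τ ω} :=
    (ae_tau_ne_zero hθ x).mono fun ω hω => by simpa [pos_iff_ne_zero] using hω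
  rw [Rop_eq_tsum hst hτ hf, tsum_eq_zero_add' ENNReal.summable,
    Measure.restrict_eq_self_of_ae_mem hpos, M.lintegral_comp_eval_zero hf]

lemma Rop_Pop_eq_tsum_add_Qop (hst : IsPathStoppingTime τ) (hθ : ThetaCompatible M τ)
    (hτ : ∀ x, EtauE M τ x ≠ ⊤) {f : X → ℝ≥0∞} (hf : Measurable f) (x : X) :
    Rop M τ (Pop M f) x =
      (∑' k : ℕ, ∫⁻ ω in {ω | ((k + 1 : ℕ) : ℕ∞) < τ ω}, f (ω (k + 1)) ∂M.law x) +
        Qop M τ f x := by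
  rw [Rop_eq_tsum hst hτ (M.measurable_Pop hf), Qop_eq_tsum_succ hst hθ, ← ENNReal.tsum_add]
  refine tsum_congr fun k => ?_
  have hsplit : {ω | (k : ℕ∞) < τ ω} =
      {ω | ((k + 1 : ℕ) : ℕ∞) < τ ω} ∪ {ω | τ ω = ((k + 1 : ℕ) : ℕ∞)} := by
    ext ω
    simp only [mem_union, mem_ofPred_eq]
    rw [← ENat.add_one_le_iff (ENat.natCast_ne_top k), le_iff_lt_or_eq, eq_comm, Nat.cast_succ]
  have hdisj : Disjoint {ω | ((k + 1 : ℕ) : ℕ∞) < τ ω} {ω | τ ω = ((k + 1 : ℕ) : ℕ∞)} :=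
    disjoint_left.2 fun ω h1 h2 => (show ((k + 1 : ℕ) : ℕ∞) < τ ω from h1).ne' h2
  calc ∫⁻ ω in {ω | (k : ℕ∞) < τ ω}, Pop M f (ω k) ∂M.law x
      = ∫⁻ ω in {ω | (k : ℕ∞) < τ ω}, f (ω (1 + k)) ∂M.law x :=
        (M.markov x k _ (hst.measurableSet_lt k) _ (hf.comp (measurable_pi_apply 1))).symm
    _ = _ := by
        rw [hsplit, lintegral_union (hst.measurableSet_eq _) hdisj, add_comm 1 k]

lemma Rop_Sop_eq_Qop (hst : IsPathStoppingTime τ) (hθ : ThetaCompatible M τ)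
    (hτ : ∀ x, EtauE M τ x ≠ ⊤) {f : X → ℝ≥0∞} (hf : Measurable f) (x : X) :
    Rop M τ (Sop M τ f) x = Qop M τ f x := by
  rw [Rop_eq_tsum hst hτ (measurable_Sop hst hf), Qop_eq_tsum_succ hst hθ]
  refine tsum_congr fun k => ?_
  have hf1 : Measurable fun η : ℕ → X => f (η 1) := hf.comp (measurable_pi_apply 1)
  have hsub : {ω | τ ω = ((k + 1 : ℕ) : ℕ∞)} ⊆ {ω | (k : ℕ∞) < τ ω} := fun ω hω => by
    simp only [mem_ofPred_eq] at hω ⊢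
    rw [hω]
    exact_mod_cast k.lt_succ_self
  calc ∫⁻ ω in {ω | (k : ℕ∞) < τ ω}, Sop M τ f (ω k) ∂M.law x
      = ∫⁻ ω in {ω | (k : ℕ∞) < τ ω},
          {η | τ η = 1}.indicator (fun η => f (η 1)) (fun j => ω (j + k)) ∂M.law x := by
        simp_rw [Sop, ← lintegral_indicator (hst.measurableSet_eq 1)]
        exact (M.markov x k _ (hst.measurableSet_lt k) _
          (hf1.indicator (hst.measurableSet_eq 1))).symm
    _ = ∫⁻ ω in {ω | (k : ℕ∞) < τ ω},
          {ω | τ ω = ((k + 1 : ℕ) : ℕ∞)}.indicator (fun ω => f (ω (k + 1))) ω ∂M.law x := by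
        refine setLIntegral_congr_fun_ae (hst.measurableSet_lt' k) ?_
        filter_upwards [ae_tau_shift hst hθ x] with ω hω hk
        have hiff : τ ω - k = 1 ↔ τ ω = ((k + 1 : ℕ) : ℕ∞) := by
          generalize τ ω = t at hk ⊢
          push_cast
          enat_to_nat
          omega
        simp only [indicator_apply, mem_ofPred_eq, hω k hk, hiff, add_comm 1 k]
    _ = ∫⁻ ω in {ω | τ ω = ((k + 1 : ℕ) : ℕ∞)}, f (ω (k + 1)) ∂M.law x := by
        rw [setLIntegral_indicator (hst.measurableSet_eq _), inter_eq_left.2 hsub]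

lemma self_le_Rop (hst : IsPathStoppingTime τ) (hθ : ThetaCompatible M τ)
    (hτ : ∀ x, EtauE M τ x ≠ ⊤) {f : X → ℝ≥0∞} (hf : Measurable f) (x : X) :
    f x ≤ Rop M τ f x := by
  rw [Rop_eq_add_tsum hst hθ hτ hf]
  exact le_self_add

lemma _root_.QInvariant.lintegral_le {ν : Measure X} (hinv : QInvariant M τ ν) {g : X → ℝ≥0∞}
    (hg : Measurable g) {C : ℝ≥0∞} (hC : ∀ x, Qop M τ g x ≤ C) : ∫⁻ x, g x ∂ν ≤ C * ν univ := by
  have htrunc : ∀ n : ℕ, ∫⁻ x, min (g x) n ∂ν ≤ C * ν univ := fun n => by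
    rw [← hinv _ (hg.min measurable_const)
      ⟨n, ENNReal.natCast_ne_top n, fun x => min_le_right _ _⟩, ← lintegral_const]
    exact lintegral_mono fun x => (lintegral_mono fun ω => min_le_left _ _).trans (hC x)
  have hsup : ∀ x, ⨆ n : ℕ, min (g x) n = g x := fun x => by
    rw [← inf_iSup_eq, ENNReal.iSup_natCast, inf_top_eq]
  calc ∫⁻ x, g x ∂ν = ⨆ n : ℕ, ∫⁻ x, min (g x) n ∂ν := by
        simp_rw [← lintegral_iSup (fun n => hg.min measurable_const)
          fun m n hmn x => min_le_min le_rfl (Nat.cast_le.2 hmn), hsup]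
    _ ≤ C * ν univ := iSup_le htrunc

variable (M τ) in
def Rstar (ν : Measure X) : Measure X :=
  Measure.sum fun k : ℕ => ((ν.bind M.law).restrict {ω | (k : ℕ∞) < τ ω}).map fun ω => ω k

lemma lintegral_Rstar (hst : IsPathStoppingTime τ) (hτ : ∀ x, EtauE M τ x ≠ ⊤)
    (ν : Measure X) {g : X → ℝ≥0∞} (hg : Measurable g) :
    ∫⁻ y, g y ∂(Rstar M τ ν) = ∫⁻ x, Rop M τ g x ∂ν := by
  have hgk (k : ℕ) : Measurable fun ω : ℕ → X => g (ω k) := hg.comp (measurable_pi_apply k)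
  have hterm (k : ℕ) :
      ∫⁻ y, g y ∂((ν.bind M.law).restrict {ω | (k : ℕ∞) < τ ω}).map (fun ω => ω k) =
        ∫⁻ x, ∫⁻ ω in {ω | (k : ℕ∞) < τ ω}, g (ω k) ∂M.law x ∂ν := by
    rw [lintegral_map hg (measurable_pi_apply k), ← lintegral_indicator (hst.measurableSet_lt' k),
      Measure.lintegral_bind M.meas_law.aemeasurable
        ((hgk k).indicator (hst.measurableSet_lt' k)).aemeasurable]
    simp_rw [lintegral_indicator (hst.measurableSet_lt' k)]
  simp_rw [Rstar, lintegral_sum_measure, hterm, Rop_eq_tsum hst hτ hg]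
  exact (lintegral_tsum fun k =>
    (M.measurable_setLIntegral_law (hgk k) (hst.measurableSet_lt' k)).aemeasurable).symm

lemma rstarEq_Rstar (hst : IsPathStoppingTime τ) (hτ : ∀ x, EtauE M τ x ≠ ⊤) (ν : Measure X) :
    RstarEq M τ ν (Rstar M τ ν) := fun A hA => by
  rw [← lintegral_indicator_one hA, lintegral_Rstar hst hτ ν (measurable_one.indicator hA)]

lemma le_Rstar (hst : IsPathStoppingTime τ) (hθ : ThetaCompatible M τ)
    (hτ : ∀ x, EtauE M τ x ≠ ⊤) (ν : Measure X) : ν ≤ Rstar M τ ν :=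
  Measure.le_intro fun A hA _ => by
    rw [← lintegral_indicator_one hA, ← lintegral_indicator_one hA,
      lintegral_Rstar hst hτ ν (measurable_one.indicator hA)]
    exact lintegral_mono (self_le_Rop hst hθ hτ (measurable_one.indicator hA))

lemma pInvariant_Rstar (hst : IsPathStoppingTime τ) (hθ : ThetaCompatible M τ)
    (hτ : ∀ x, EtauE M τ x ≠ ⊤) {ν : Measure X} (hinv : QInvariant M τ ν) :
    PInvariant M (Rstar M τ ν) := by
  intro f hf hbdd
  have hT : Measurable fun x =>
      ∑' k : ℕ, ∫⁻ ω in {ω | ((k + 1 : ℕ) : ℕ∞) < τ ω}, f (ω (k + 1)) ∂M.law x :=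
    .tsum fun k => M.measurable_setLIntegral_law (hf.comp (measurable_pi_apply _))
      (hst.measurableSet_lt' _)
  rw [lintegral_Rstar hst hτ ν (M.measurable_Pop hf), lintegral_Rstar hst hτ ν hf]
  simp_rw [Rop_Pop_eq_tsum_add_Qop hst hθ hτ hf, Rop_eq_add_tsum hst hθ hτ hf]
  rw [lintegral_add_left hT, lintegral_add_left hf, hinv f hf hbdd, add_comm]

lemma sstarEq_Rstar (hst : IsPathStoppingTime τ) (hθ : ThetaCompatible M τ)
    (hτ : ∀ x, EtauE M τ x ≠ ⊤) {ν : Measure X} (hinv : QInvariant M τ ν) :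
    SstarEq M τ (Rstar M τ ν) ν := fun A hA => by
  have hA1 : Measurable (A.indicator (1 : X → ℝ≥0∞)) := measurable_one.indicator hA
  rw [lintegral_Rstar hst hτ ν (measurable_Sop hst hA1)]
  simp_rw [Rop_Sop_eq_Qop hst hθ hτ hA1]
  rw [hinv _ hA1 ⟨1, ENNReal.one_ne_top, fun x => indicator_le (fun _ _ => le_rfl) x⟩,
    lintegral_indicator_one hA]

lemma isFiniteMeasure_Rstar (hst : IsPathStoppingTime τ) (hτ : ∀ x, EtauE M τ x ≠ ⊤)
    {ν : Measure X} [IsFiniteMeasure ν] (hinv : QInvariant M τ ν) {C : ℝ≥0∞} (hC : C ≠ ⊤)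
    (hQR : ∀ x, Qop M τ (Rop M τ 1) x ≤ C) : IsFiniteMeasure (Rstar M τ ν) := by
  have hmass := lintegral_Rstar hst hτ ν (g := 1) measurable_one
  simp only [Pi.one_apply, lintegral_one] at hmass
  refine ⟨hmass ▸ ?_⟩
  exact (hinv.lintegral_le (measurable_Rop hst hτ measurable_one) hQR).trans_lt
    (ENNReal.mul_lt_top hC.lt_top (measure_lt_top ν univ))

end MarkovChain

open MarkovChain in
theorem stmt3_general
    (M : MarkovChain X) (τ : (ℕ → X) → ℕ∞)
    (hst : IsPathStoppingTime τ) (hθ : ThetaCompatible M τ)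
    (hτ : ∀ x, EtauE M τ x ≠ ⊤)
    (ν : Measure X) (hν0 : ν ≠ 0) (hinv : QInvariant M τ ν) :
    ∃ m : Measure X, RstarEq M τ ν m ∧ m ≠ 0 ∧ PInvariant M m ∧ ν ≪ m ∧
      SstarEq M τ m ν ∧
      ((∃ C : ℝ≥0, ∀ x, Qop M τ (Rop M τ 1) x ≤ (C : ℝ≥0∞)) →
        (IsFiniteMeasure m ↔ IsFiniteMeasure ν)) := by
  have hle := le_Rstar hst hθ hτ ν
  refine ⟨Rstar M τ ν, rstarEq_Rstar hst hτ ν, ?_, pInvariant_Rstar hst hθ hτ hinv,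
    Measure.absolutelyContinuous_of_le hle, sstarEq_Rstar hst hθ hτ hinv, ?_⟩
  · exact fun h0 => hν0 (le_antisymm (h0 ▸ hle) (Measure.zero_le ν))
  · rintro ⟨C, hC⟩
    exact ⟨fun _ => isFiniteMeasure_of_le _ hle,
      fun _ => isFiniteMeasure_Rstar hst hτ hinv ENNReal.coe_ne_top hC⟩

/-- Lemma 1.9: if `ν` is a nonzero `Q`-invariant measure then `R*ν` is a nonzero
`P`-invariant measure, `S*R*ν = ν`, `ν ≪ R*ν`; and if `QR(1)` is bounded then `R*ν` is
finite iff `ν` is finite. -/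
theorem stmt3 [MetricSpace X] [CompleteSpace X] [TopologicalSpace.SeparableSpace X] [BorelSpace X]
    (M : MarkovChain X) (τ : (ℕ → X) → ℕ∞)
    (hst : IsPathStoppingTime τ) (hθ : ThetaCompatible M τ)
    (hτ : ∀ x, EtauE M τ x ≠ ⊤)
    (ν : Measure X) (hν0 : ν ≠ 0) (hinv : QInvariant M τ ν) :
    ∃ m : Measure X, RstarEq M τ ν m ∧ m ≠ 0 ∧ PInvariant M m ∧ ν ≪ m ∧
      SstarEq M τ m ν ∧
      ((∃ C : ℝ≥0, ∀ x, Qop M τ (Rop M τ 1) x ≤ (C : ℝ≥0∞)) →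
        (IsFiniteMeasure m ↔ IsFiniteMeasure ν)) :=
  stmt3_general M τ hst hθ hτ ν hν0 hinv

end
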